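/- If S is a right cancellative discrete semigroup containing more than one element, then S is not extremely left amenable; equivalently, a right cancellative extremely left amenable semigroup is trivial. -/

import Mathlib

open BoundedContinuousFunction

/-- A discrete semigroup `S` is extremely left amenable: `ℓ∞(S)` admits a multiplicative
left invariant mean. -/
def ExtremelyLeftAmenable (S : Type*) [Semigroup S] [TopologicalSpace S]
    [DiscreteTopology S] : Prop :=
  ∃ m : (S →ᵇ ℝ) →L[ℝ] ℝ, ‖m‖ = 1 ∧ m 1 = 1 ∧
    (∀ f g : S →ᵇ ℝ, m (f * g) = m f * m g) ∧
    (∀ (s : S) (f : S →ᵇ ℝ),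
      m (f.compContinuous ⟨fun t => s * t, continuous_of_discreteTopology⟩) = m f)

/-!
A multiplicative mean `m` is a character of `ℓ∞(S)`, so it takes only the values `0` and `1`
on indicator functions and, on any finite partition of `S`, the value `1` on exactly one
block. If a left translation `t ↦ s * t` had no fixed point, Katětov's lemma would give a
partition of `S` into three sets `A` with `A ∩ s⁻¹A = ∅`; by invariance, the block of mean `1`
and its preimage both have mean `1`, which is impossible for disjoint sets. Hence for every `s`
there is `t` with `s * t = t`; right cancellation then gives `s * s = s` and `x * y = x`. In such
a left zero semigroup the translate of the indicator of `{a}` by `a` is `1` and by any `b ≠ a`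
is `0`, contradicting invariance.
-/

open Finset in
theorem exists_three_coloring_on_finset_of_forall_ne {X : Type*} (f : X → X)
    (hf : ∀ x, f x ≠ x) (F : Finset X) : ∃ χ : X → Fin 3, ∀ x ∈ F, χ (f x) ≠ χ x := by
  classical
  induction F using Finset.strongInduction with
  | H F ih =>
  obtain rfl | hF := F.eq_empty_or_nonempty
  · exact ⟨0, by simp⟩
  obtain ⟨y, hyF, hy⟩ := exists_card_fiber_le_of_card_le_mul (s := F) (f := f) hF (n := 1)
    (by simp)
  -- `y` has at most two neighbours: `f y` and at most one preimage in `F`.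
  obtain ⟨χ, hχ⟩ := ih (F.erase y) (erase_ssubset hyF)
  set P := insert (χ (f y)) ({x ∈ F | f x = y}.image χ)
  have hP : #P < #(univ : Finset (Fin 3)) :=
    calc #P ≤ #({x ∈ F | f x = y}.image χ) + 1 := card_insert_le _ _
      _ ≤ 1 + 1 := by gcongr; exact card_image_le.trans hy
      _ < #(univ : Finset (Fin 3)) := by simp
  obtain ⟨c, -, hc⟩ := exists_mem_notMem_of_card_lt_card hP
  refine ⟨Function.update χ y c, fun x hx => ?_⟩
  rcases eq_or_ne x y with rfl | hxy
  · rw [Function.update_self, Function.update_of_ne (hf x)]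
    exact fun h => hc (h ▸ mem_insert_self _ _)
  rw [Function.update_of_ne hxy]
  rcases eq_or_ne (f x) y with hfx | hfx
  · rw [hfx, Function.update_self]
    exact fun h => hc (h ▸ mem_insert_of_mem (mem_image_of_mem χ (by simp [hx, hfx])))
  · rw [Function.update_of_ne hfx]
    exact hχ x (mem_erase.mpr ⟨hxy, hx⟩)

theorem exists_three_coloring_of_forall_ne {X : Type*} (f : X → X) (hf : ∀ x, f x ≠ x) :
    ∃ χ : X → Fin 3, ∀ x, χ (f x) ≠ χ x := by
  classical
  let G := SimpleGraph.fromRel fun x y : X => f x = y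
  choose χ hχ using exists_three_coloring_on_finset_of_forall_ne f hf
  obtain ⟨C⟩ : Nonempty (G.Coloring (Fin 3)) := by
    refine SimpleGraph.nonempty_hom_of_forall_finite_subgraph_hom fun G' hG' => ?_
    refine SimpleGraph.Coloring.mk (fun v => χ hG'.toFinset v) fun {v w} hvw => ?_
    obtain ⟨-, hvw | hwv⟩ := (SimpleGraph.fromRel_adj _ _ _).mp (G'.adj_sub hvw)
    · exact hvw ▸ (hχ _ v (by simp)).symm
    · exact hwv ▸ hχ _ w (by simp)
  exact ⟨C, fun x => C.valid ((SimpleGraph.fromRel_adj _ _ _).mpr ⟨hf x, Or.inr rfl⟩)⟩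

namespace BoundedContinuousFunction

variable {S : Type*} [TopologicalSpace S] [DiscreteTopology S]

noncomputable def discreteIndicator (A : Set S) : S →ᵇ ℝ :=
  mkOfDiscrete (A.indicator 1) 1 fun x y => by
    classical
    simp only [Set.indicator_apply, Pi.one_apply]
    split_ifs <;> norm_num

@[simp]
theorem discreteIndicator_apply (A : Set S) (t : S) :
    discreteIndicator A t = A.indicator 1 t := rfl

@[simp]
theorem discreteIndicator_univ : discreteIndicator (Set.univ : Set S) = 1 := by
  ext; simp

@[simp]
theorem discreteIndicator_empty : discreteIndicator (∅ : Set S) = 0 := by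
  ext; simp

theorem discreteIndicator_inter (A B : Set S) :
    discreteIndicator (A ∩ B) = discreteIndicator A * discreteIndicator B := by
  ext; simp [Set.inter_indicator_one]

theorem discreteIndicator_preimage {T : Type*} [TopologicalSpace T] [DiscreteTopology T]
    (φ : T → S) (A : Set S) :
    discreteIndicator (φ ⁻¹' A) =
      (discreteIndicator A).compContinuous ⟨φ, continuous_of_discreteTopology⟩ :=
  rfl

theorem sum_discreteIndicator_fiber {ι : Type*} [Fintype ι] (χ : S → ι) :
    ∑ i, discreteIndicator (χ ⁻¹' {i}) = 1 := by
  classical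
  ext t
  simp [Set.indicator_apply]

end BoundedContinuousFunction

section Character

variable {S : Type*} [TopologicalSpace S] [DiscreteTopology S] (m : (S →ᵇ ℝ) →+* ℝ)

theorem character_discreteIndicator_eq_zero_or_one (A : Set S) :
    m (discreteIndicator A) = 0 ∨ m (discreteIndicator A) = 1 := by
  refine IsIdempotentElem.iff_eq_zero_or_one.mp (IsIdempotentElem.map ?_ m)
  rw [IsIdempotentElem, ← discreteIndicator_inter, Set.inter_self]

theorem nonempty_inter_of_character_eq_one {A B : Set S} (hA : m (discreteIndicator A) = 1)
    (hB : m (discreteIndicator B) = 1) : (A ∩ B).Nonempty := by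
  rw [Set.nonempty_iff_ne_empty]
  rintro hAB
  have := congrArg m (discreteIndicator_inter A B)
  rw [hAB, map_mul, hA, hB, mul_one, discreteIndicator_empty, map_zero] at this
  exact zero_ne_one this

theorem exists_character_discreteIndicator_fiber_eq_one {ι : Type*} [Fintype ι] (χ : S → ι) :
    ∃ i, m (discreteIndicator (χ ⁻¹' {i})) = 1 := by
  by_contra! h
  have hsum := congrArg m (sum_discreteIndicator_fiber χ)
  rw [map_sum, map_one, Finset.sum_eq_zero fun i _ =>
    (character_discreteIndicator_eq_zero_or_one m _).resolve_right (h i)] at hsum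
  exact zero_ne_one hsum

theorem exists_fixedPoint_of_character_invariant (φ : S → S)
    (hφ : ∀ A, m (discreteIndicator (φ ⁻¹' A)) = m (discreteIndicator A)) : ∃ t, φ t = t := by
  by_contra! hfree
  obtain ⟨χ, hχ⟩ := exists_three_coloring_of_forall_ne φ hfree
  obtain ⟨i, hi⟩ := exists_character_discreteIndicator_fiber_eq_one m χ
  obtain ⟨t, hti, hφti⟩ := nonempty_inter_of_character_eq_one m hi ((hφ _).trans hi)
  exact hχ t (hφti.trans hti.symm)

theorem subsingleton_of_character_invariant_of_mul_eq_left [Mul S]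
    (hleft : ∀ x y : S, x * y = x)
    (hm : ∀ (s : S) A, m (discreteIndicator ((s * ·) ⁻¹' A)) = m (discreteIndicator A)) :
    Subsingleton S := by
  refine ⟨fun a b => by_contra fun hab => ?_⟩
  have ha : (a * ·) ⁻¹' {a} = Set.univ := by ext t; simp [hleft]
  have hb : (b * ·) ⁻¹' {a} = ∅ := by ext t; simp [hleft, Ne.symm hab]
  have := (hm a {a}).trans (hm b {a}).symm
  rw [ha, hb, discreteIndicator_univ, discreteIndicator_empty, map_one, map_zero] at this
  exact one_ne_zero this

end Character

theorem mul_eq_left_of_forall_exists_mul_eq {S : Type*} [Semigroup S] [IsRightCancelMul S]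
    (h : ∀ s : S, ∃ t, s * t = t) (x y : S) : x * y = x := by
  have idem (s : S) : s * s = s := by
    obtain ⟨t, ht⟩ := h s
    exact mul_right_cancel (b := t) (by rw [mul_assoc, ht, ht])
  exact mul_right_cancel (b := x * y) (by rw [idem, ← mul_assoc, idem])

/-- A right cancellative extremely left amenable discrete semigroup is trivial. -/
theorem rightCancellative_extremelyLeftAmenable_subsingleton (S : Type*) [Semigroup S]
    [TopologicalSpace S] [DiscreteTopology S]
    (hrc : ∀ a b c : S, a * c = b * c → a = b)
    (hela : ExtremelyLeftAmenable S) :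
    ∀ a b : S, a = b := by
  obtain ⟨m, -, hm_one, hm_mul, hm_inv⟩ := hela
  let μ : (S →ᵇ ℝ) →+* ℝ :=
    { m.toLinearMap.toAddMonoidHom with map_one' := hm_one, map_mul' := hm_mul }
  have hμ (s : S) (A : Set S) :
      μ (discreteIndicator ((s * ·) ⁻¹' A)) = μ (discreteIndicator A) := by
    rw [discreteIndicator_preimage]
    exact hm_inv s _
  have : IsRightCancelMul S := ⟨fun a b c => hrc b c a⟩
  have hleft := mul_eq_left_of_forall_exists_mul_eq fun s =>
    exists_fixedPoint_of_character_invariant μ (s * ·) (hμ s)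
  exact (subsingleton_of_character_invariant_of_mul_eq_left μ hleft hμ).elim
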